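/- Let m ≡ 11 (mod 12) with m ≥ 11, n = 2^m - 1, and v = 2^((m+1)/2) - 1. Then gcd(v, n) = 1, and for every integer a with 1 ≤ a ≤ 2^((m-1)/2) + 2, the binary digit sum of (a·v mod n) is congruent to 0, 1, or 2 modulo 6. -/

import Mathlib

/-! Write k = (m + 1)/2 and P = 2^(k-1), so that v = 2P - 1 and n = 2P² - 1; then
gcd(v, n) = 2^gcd(k, 2k - 1) - 1 = 1. For a ≤ P the product a·v = (a - 1)·2^k + (2^k - a) is
already reduced, and its binary digits are those of a - 1 followed by their complement in k bits,
so its digit sum is k ≡ 0 (mod 6). For a = P + 1 and a = P + 2 the residues are P and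
2^k + (P - 1), with digit sums 1 and k. -/

namespace Nat

variable {b : ℕ}

theorem digits_sum_eq_mod_add_digits_sum_div (hb : 1 < b) (n : ℕ) :
    (b.digits n).sum = n % b + (b.digits (n / b)).sum := by
  rcases n.eq_zero_or_pos with rfl | hn
  · simp
  · simp [digits_def' hb hn]

theorem digits_sum_add_base_pow_mul (hb : 1 < b) {k x : ℕ} (hx : x < b ^ k) (y : ℕ) :
    (b.digits (x + b ^ k * y)).sum = (b.digits x).sum + (b.digits y).sum := by
  rcases y.eq_zero_or_pos with rfl | hy
  · simp
  obtain ⟨j, rfl⟩ := Nat.exists_eq_add_of_le ((digits_length_le_iff hb x).2 hx)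
  rw [← digits_append_zeroes_append_digits hb hy]
  simp

theorem digits_sum_add_digits_sum_base_pow_sub_one_sub (hb : 1 < b) {k x : ℕ} (hx : x < b ^ k) :
    (b.digits x).sum + (b.digits (b ^ k - 1 - x)).sum = k * (b - 1) := by
  induction k generalizing x with
  | zero => simp_all
  | succ k ih =>
    have hq : x / b < b ^ k := Nat.div_lt_of_lt_mul (by rwa [mul_comm, ← pow_succ])
    have hr : x % b < b := mod_lt x (by omega)
    -- complementing a number digitwise complements its last digit and the number above it
    have hsplit : b ^ (k + 1) - 1 - x = (b - 1 - x % b) + b * (b ^ k - 1 - x / b) := by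
      have hx' := mod_add_div x b
      have hmul : b * (b ^ k - 1 - x / b) + b * (x / b) + b = b ^ (k + 1) := by
        rw [← mul_add, ← mul_add_one, pow_succ', show b ^ k - 1 - x / b + x / b + 1 = b ^ k by omega]
      omega
    have hdigit : b - 1 - x % b < b := by omega
    rw [hsplit, digits_sum_eq_mod_add_digits_sum_div hb x,
      digits_sum_eq_mod_add_digits_sum_div hb (_ + _), add_mul_mod_self_left,
      add_mul_div_left _ _ (by omega), mod_eq_of_lt hdigit, div_eq_of_lt hdigit, zero_add]
    have := ih hq
    rw [add_mul, one_mul]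
    omega

theorem digits_sum_base_pow_sub_one (hb : 1 < b) (k : ℕ) :
    (b.digits (b ^ k - 1)).sum = k * (b - 1) := by
  simpa using digits_sum_add_digits_sum_base_pow_sub_one_sub hb (pow_pos (by omega) k)

theorem digits_sum_base_pow (hb : 1 < b) (k : ℕ) : (b.digits (b ^ k)).sum = 1 := by
  simpa [digits_of_lt b 1 one_ne_zero hb] using
    digits_sum_add_base_pow_mul hb (pow_pos (by omega : 0 < b) k) 1

theorem digits_sum_mul_base_pow_sub_one (hb : 1 < b) {k a : ℕ} (ha : 1 ≤ a) (hak : a ≤ b ^ k) :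
    (b.digits (a * (b ^ k - 1))).sum = k * (b - 1) := by
  have hsplit : a * (b ^ k - 1) = (b ^ k - 1 - (a - 1)) + b ^ k * (a - 1) := by
    zify [ha, hak, show 1 ≤ b ^ k by omega, show a - 1 ≤ b ^ k - 1 by omega]
    ring
  rw [hsplit, digits_sum_add_base_pow_mul hb (by omega), add_comm]
  exact digits_sum_add_digits_sum_base_pow_sub_one_sub hb (by omega)

theorem digits_two_sum_mul_two_pow_succ_sub_one_mod {j a : ℕ} (hj : 1 ≤ j) (ha : 1 ≤ a)
    (haj : a ≤ 2 ^ j + 2) :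
    (digits 2 (a * (2 ^ (j + 1) - 1) % (2 ^ (2 * j + 1) - 1))).sum = j + 1 ∨
      (digits 2 (a * (2 ^ (j + 1) - 1) % (2 ^ (2 * j + 1) - 1))).sum = 1 := by
  have hv : 2 ^ (j + 1) = 2 * 2 ^ j := by ring
  have hn : 2 ^ (2 * j + 1) = 2 * 2 ^ j * 2 ^ j := by ring
  have hP : 2 ≤ 2 ^ j := le_self_pow₀ one_le_two (by omega)
  set P := 2 ^ j
  have hPP : 4 * P ≤ 2 * P * P := by nlinarith
  rw [hn]
  rcases (by omega : a ≤ P ∨ a = P + 1 ∨ a = P + 2) with hle | rfl | rfl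
  · have hlt : a * (2 * P - 1) < 2 * P * P - 1 := by
      zify [show 1 ≤ 2 * P by omega, show 1 ≤ 2 * P * P by omega]
      nlinarith
    left
    rw [hv, mod_eq_of_lt hlt, ← hv, digits_sum_mul_base_pow_sub_one one_lt_two ha (by omega)]
    simp
  -- the quotient is 1 in the remaining two cases
  · have hrem : (P + 1) * (2 ^ (j + 1) - 1) = (2 * P * P - 1) + P := by
      rw [hv]
      zify [show 1 ≤ 2 * P by omega, show 1 ≤ 2 * P * P by omega]
      ring
    right
    rw [hrem, add_mod_left, mod_eq_of_lt (by omega), digits_sum_base_pow one_lt_two]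
  · have hrem : (P + 2) * (2 ^ (j + 1) - 1) = (2 * P * P - 1) + ((P - 1) + 2 ^ (j + 1) * 1) := by
      rw [hv]
      zify [show 1 ≤ P by omega, show 1 ≤ 2 * P by omega, show 1 ≤ 2 * P * P by omega]
      ring
    left
    rw [hrem, add_mod_left, mod_eq_of_lt (by omega),
      digits_sum_add_base_pow_mul one_lt_two (by omega), digits_sum_base_pow_sub_one one_lt_two]
    simp

end Nat

theorem m11mod12_defSet_general (m : ℕ) (h : m % 12 = 11) :
    Nat.gcd (2 ^ ((m + 1) / 2) - 1) (2 ^ m - 1) = 1 ∧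
    ∀ a : ℕ, 1 ≤ a → a ≤ 2 ^ ((m - 1) / 2) + 2 →
      (Nat.digits 2 (a * (2 ^ ((m + 1) / 2) - 1) % (2 ^ m - 1))).sum % 6 = 0 ∨
      (Nat.digits 2 (a * (2 ^ ((m + 1) / 2) - 1) % (2 ^ m - 1))).sum % 6 = 1 ∨
      (Nat.digits 2 (a * (2 ^ ((m + 1) / 2) - 1) % (2 ^ m - 1))).sum % 6 = 2 := by
  obtain ⟨j, rfl⟩ : ∃ j, m = 2 * j + 1 := ⟨m / 2, by omega⟩
  rw [show (2 * j + 1 + 1) / 2 = j + 1 by omega, show (2 * j + 1 - 1) / 2 = j by omega]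
  refine ⟨?_, fun a ha haj => ?_⟩
  · have hgcd : Nat.gcd (j + 1) (2 * j + 1) = 1 := by
      rw [show 2 * j + 1 = j + 1 + j by ring]
      simp
    rw [Nat.pow_sub_one_gcd_pow_sub_one, hgcd, pow_one]
  · rcases Nat.digits_two_sum_mul_two_pow_succ_sub_one_mod (by omega) ha haj with hs | hs <;>
      omega

theorem m11mod12_defSet (m : ℕ) (hm : 11 ≤ m) (h : m % 12 = 11) :
    Nat.gcd (2 ^ ((m + 1) / 2) - 1) (2 ^ m - 1) = 1 ∧
    ∀ a : ℕ, 1 ≤ a → a ≤ 2 ^ ((m - 1) / 2) + 2 →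
      (Nat.digits 2 (a * (2 ^ ((m + 1) / 2) - 1) % (2 ^ m - 1))).sum % 6 = 0 ∨
      (Nat.digits 2 (a * (2 ^ ((m + 1) / 2) - 1) % (2 ^ m - 1))).sum % 6 = 1 ∨
      (Nat.digits 2 (a * (2 ^ ((m + 1) / 2) - 1) % (2 ^ m - 1))).sum % 6 = 2 :=
  m11mod12_defSet_general m h
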